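/- arXiv:0802.4192 — 7 statements merged into one kernel-verified Lean document; each statement's English description precedes it below -/
import Mathlib

section
/- Let H be a real Hilbert space, s ∈ H, and M̃ a countable collection of finite-dimensional subspaces of H containing the zero subspace. Let α > 0 and let (λ_n)_{n≥1} be a nondecreasing sequence of positive reals with λ_{2n} ≤ 2 λ_n for all n ≥ 1 and λ_n / n → 0 as n → ∞. Then sup_{n≥1} (λ_n/n)^{−2α/(1+2α)} · inf_{m ∈ M̃} ( ‖P_m s − s‖² + (λ_n/n)·D_m ) < ∞ if and only if sup_{M∈ℕ, M≥1} M^{α} · inf { ‖P_m s − s‖ : m ∈ M̃, D_m ≤ M } < ∞. -/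
/-!
Write `E i = ‖P_{m i} s - s‖`, `D i = dim m i`, `Q t = inf_i (E i ^ 2 + t * D i)` and
`R M = inf {E i | D i ≤ M}`. An index nearly attaining `Q t` has dimension below `Q t / t`
and squared error below `Q t`, while an index nearly attaining `R M` gives
`Q t ≤ R M ^ 2 + t * M`. Balancing `t ≍ M ^ (-(1 + 2α))` shows that
`Q t = O(t ^ (2α / (1 + 2α)))` on `t > 0` if and only if `R M = O(M ^ (-α))`.

Since `λ` is nondecreasing, `ε n = λ n / n` loses at most a factor `2` from `n` to `n + 1`
and tends to `0`, so each `t ≤ ε 1` lies in some `[ε n, 2 ε n)`; as `Q t ≤ 2 Q u` for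
`t ≤ 2u`, the bound along `ε n` is equivalent to the bound for all `t > 0`.
-/

open Filter Topology Real

namespace ModelSelection

variable {ι : Type*}

noncomputable def penalizedError (E : ι → ℝ) (D : ι → ℕ) (t : ℝ) : ℝ :=
  sInf {x : ℝ | ∃ i : ι, x = E i ^ 2 + t * (D i : ℝ)}

noncomputable def approxError (E : ι → ℝ) (D : ι → ℕ) (M : ℕ) : ℝ :=
  sInf {x : ℝ | ∃ i : ι, D i ≤ M ∧ x = E i}

variable {E : ι → ℝ} {D : ι → ℕ}

theorem penalizedError_le {t : ℝ} (ht : 0 ≤ t) (i : ι) :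
    penalizedError E D t ≤ E i ^ 2 + t * D i :=
  csInf_le ⟨0, by rintro _ ⟨j, rfl⟩; positivity⟩ ⟨i, rfl⟩

theorem penalizedError_nonneg {t : ℝ} (ht : 0 ≤ t) : 0 ≤ penalizedError E D t :=
  Real.sInf_nonneg (by rintro _ ⟨j, rfl⟩; positivity)

theorem exists_lt_of_penalizedError_lt [Nonempty ι] {t b : ℝ} (h : penalizedError E D t < b) :
    ∃ i, E i ^ 2 + t * D i < b := by
  obtain ⟨_, ⟨i, rfl⟩, hi⟩ :=
    exists_lt_of_csInf_lt (by exact ⟨_, Classical.arbitrary ι, rfl⟩) h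
  exact ⟨i, hi⟩

theorem penalizedError_le_two_mul [Nonempty ι] {t u : ℝ} (ht : 0 ≤ t) (htu : t ≤ 2 * u) :
    penalizedError E D t ≤ 2 * penalizedError E D u := by
  rw [← div_le_iff₀' two_pos]
  refine le_csInf ⟨_, Classical.arbitrary ι, rfl⟩ ?_
  rintro _ ⟨i, rfl⟩
  rw [div_le_iff₀' two_pos]
  have hD : (0 : ℝ) ≤ D i := Nat.cast_nonneg _
  calc penalizedError E D t ≤ E i ^ 2 + t * D i := penalizedError_le ht i
    _ ≤ 2 * (E i ^ 2 + u * D i) := by nlinarith [sq_nonneg (E i)]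

theorem approxError_nonneg (hE : ∀ i, 0 ≤ E i) (M : ℕ) : 0 ≤ approxError E D M :=
  Real.sInf_nonneg (by rintro _ ⟨i, -, rfl⟩; exact hE i)

theorem approxError_le (hE : ∀ i, 0 ≤ E i) {M : ℕ} {i : ι} (hi : D i ≤ M) :
    approxError E D M ≤ E i :=
  csInf_le ⟨0, by rintro _ ⟨j, -, rfl⟩; exact hE j⟩ ⟨i, hi, rfl⟩

theorem exists_lt_of_approxError_lt {i₀ : ι} (hi₀ : D i₀ = 0) {M : ℕ} {r : ℝ}
    (h : approxError E D M < r) : ∃ i, D i ≤ M ∧ E i < r := by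
  obtain ⟨_, ⟨i, hi, rfl⟩, hlt⟩ :=
    exists_lt_of_csInf_lt (by exact ⟨E i₀, i₀, by omega, rfl⟩) h
  exact ⟨i, hi, hlt⟩

theorem approxError_sq_lt [Nonempty ι] (hE : ∀ i, 0 ≤ E i) {t b : ℝ} {M : ℕ} (ht : 0 < t)
    (h : penalizedError E D t < b) (hM : b / t ≤ M) : approxError E D M ^ 2 < b := by
  obtain ⟨i, hi⟩ := exists_lt_of_penalizedError_lt h
  have hD : (0 : ℝ) ≤ t * D i := by positivity
  have hDi : D i ≤ M := by
    have : (D i : ℝ) < b / t := (lt_div_iff₀' ht).2 (by nlinarith [sq_nonneg (E i)])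
    exact_mod_cast (this.trans_le hM).le
  calc approxError E D M ^ 2 ≤ E i ^ 2 :=
        pow_le_pow_left₀ (approxError_nonneg hE M) (approxError_le hE hDi) 2
    _ < b := by linarith

theorem penalizedError_le_of_approxError_lt (hE : ∀ i, 0 ≤ E i) {i₀ : ι} (hi₀ : D i₀ = 0)
    {t r : ℝ} {M : ℕ} (ht : 0 ≤ t) (h : approxError E D M < r) :
    penalizedError E D t ≤ r ^ 2 + t * M := by
  obtain ⟨i, hiM, hir⟩ := exists_lt_of_approxError_lt hi₀ h
  calc penalizedError E D t ≤ E i ^ 2 + t * D i := penalizedError_le ht i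
    _ ≤ r ^ 2 + t * M :=
      add_le_add (pow_le_pow_left₀ (hE i) hir.le 2)
        (mul_le_mul_of_nonneg_left (by exact_mod_cast hiM) ht)

theorem exists_penalizedError_le_rpow_of_Ioc {i₀ : ι} (hi₀ : D i₀ = 0) {β t₁ C : ℝ}
    (hβ : 0 ≤ β) (ht₁ : 0 < t₁)
    (h : ∀ t ∈ Set.Ioc 0 t₁, penalizedError E D t ≤ C * t ^ β) :
    ∃ C', ∀ t, 0 < t → penalizedError E D t ≤ C' * t ^ β := by
  refine ⟨max C (E i₀ ^ 2 / t₁ ^ β), fun t ht => ?_⟩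
  rcases le_or_gt t t₁ with htt | htt
  · exact (h t ⟨ht, htt⟩).trans
      (mul_le_mul_of_nonneg_right (le_max_left _ _) (rpow_nonneg ht.le β))
  · calc penalizedError E D t ≤ E i₀ ^ 2 := by
          simpa [hi₀] using penalizedError_le (E := E) (D := D) ht.le i₀
      _ = E i₀ ^ 2 / t₁ ^ β * t₁ ^ β :=
          (div_mul_cancel₀ _ (rpow_pos_of_pos ht₁ β).ne').symm
      _ ≤ max C (E i₀ ^ 2 / t₁ ^ β) * t ^ β :=
        mul_le_mul (le_max_right _ _) (rpow_le_rpow ht₁.le htt.le hβ)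
          (rpow_nonneg ht₁.le β) (le_max_of_le_right (by positivity))

theorem rpow_one_add_two_mul {s : ℝ} (hs : 0 < s) (α : ℝ) :
    s ^ (1 + 2 * α) = s * (s ^ α) ^ 2 := by
  rw [rpow_add hs, rpow_one, ← rpow_natCast, ← rpow_mul hs.le]
  push_cast
  ring_nf

theorem rpow_one_add_two_mul_rpow_div {s α : ℝ} (hs : 0 ≤ s) (hα : 0 ≤ α) :
    (s ^ (1 + 2 * α)) ^ (2 * α / (1 + 2 * α)) = (s ^ α) ^ 2 := by
  rw [← rpow_mul hs, ← rpow_natCast, ← rpow_mul hs]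
  congr 1
  field_simp
  push_cast
  ring

theorem exists_approxError_le_of_penalizedError_le [Nonempty ι] (hE : ∀ i, 0 ≤ E i)
    {α C : ℝ} (hα : 0 ≤ α)
    (h : ∀ t, 0 < t → penalizedError E D t ≤ C * t ^ (2 * α / (1 + 2 * α))) :
    ∃ C', ∀ M : ℕ, 1 ≤ M → (M : ℝ) ^ α * approxError E D M ≤ C' := by
  set K := |C| + 1
  have hK : 0 < K := by positivity
  refine ⟨√K * K ^ α, fun M hM => ?_⟩
  have hM0 : (0 : ℝ) < M := by exact_mod_cast hM
  set s := K / M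
  have hs : 0 < s := div_pos hK hM0
  have hMs : (M : ℝ) * s = K := mul_div_cancel₀ K hM0.ne'
  have hQ : penalizedError E D (s ^ (1 + 2 * α)) < K * (s ^ α) ^ 2 := by
    calc penalizedError E D (s ^ (1 + 2 * α)) ≤ C * (s ^ α) ^ 2 := by
          simpa only [rpow_one_add_two_mul_rpow_div hs.le hα] using
            h (s ^ (1 + 2 * α)) (rpow_pos_of_pos hs _)
      _ < K * (s ^ α) ^ 2 :=
          mul_lt_mul_of_pos_right ((le_abs_self C).trans_lt (lt_add_one _))
            (pow_pos (rpow_pos_of_pos hs α) 2)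
  -- at the scale `t = s ^ (1 + 2α)` the dimension bound `K (s ^ α)² / t = K / s` is exactly `M`
  have hR := approxError_sq_lt hE (rpow_pos_of_pos hs _) hQ (M := M) <| le_of_eq <| by
    rw [rpow_one_add_two_mul hs, ← hMs]
    field_simp
  refine (lt_of_pow_lt_pow_left₀ 2 (by positivity) ?_).le
  calc ((M : ℝ) ^ α * approxError E D M) ^ 2 = (M ^ α) ^ 2 * approxError E D M ^ 2 := mul_pow ..
    _ < (M ^ α) ^ 2 * (K * (s ^ α) ^ 2) := mul_lt_mul_of_pos_left hR (by positivity)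
    _ = K * ((M * s) ^ α) ^ 2 := by rw [mul_rpow hM0.le hs.le]; ring
    _ = (√K * K ^ α) ^ 2 := by rw [hMs, mul_pow, sq_sqrt hK.le]

theorem exists_penalizedError_le_of_approxError_le (hE : ∀ i, 0 ≤ E i) {i₀ : ι}
    (hi₀ : D i₀ = 0) {α C : ℝ} (hα : 0 ≤ α)
    (h : ∀ M : ℕ, 1 ≤ M → (M : ℝ) ^ α * approxError E D M ≤ C) :
    ∃ C', ∀ t, 0 < t → penalizedError E D t ≤ C' * t ^ (2 * α / (1 + 2 * α)) := by
  refine exists_penalizedError_le_rpow_of_Ioc hi₀ (by positivity) one_pos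
    (C := (C + 1) ^ 2 + 2) fun t ⟨ht, ht1⟩ => ?_
  set s := t ^ (1 + 2 * α)⁻¹
  have hs : 0 < s := rpow_pos_of_pos ht _
  have hs1 : s ≤ 1 := rpow_le_one ht.le ht1 (by positivity)
  have hts : t = s ^ (1 + 2 * α) := (rpow_inv_rpow ht.le (by positivity)).symm
  rw [hts, rpow_one_add_two_mul_rpow_div hs.le hα, rpow_one_add_two_mul hs]
  set M := ⌈s⁻¹⌉₊
  have hsM : s⁻¹ ≤ M := Nat.le_ceil _
  have hMs : (M : ℝ) < s⁻¹ + 1 := Nat.ceil_lt_add_one (inv_pos.2 hs).le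
  have hsα : 0 < s ^ α := rpow_pos_of_pos hs α
  have hR : approxError E D M < (C + 1) * s ^ α := by
    have : approxError E D M * (s ^ α)⁻¹ ≤ C :=
      calc approxError E D M * (s ^ α)⁻¹ = s⁻¹ ^ α * approxError E D M := by
            rw [inv_rpow hs.le]; ring
        _ ≤ M ^ α * approxError E D M :=
            mul_le_mul_of_nonneg_right (rpow_le_rpow (inv_pos.2 hs).le hsM hα)
              (approxError_nonneg hE M)
        _ ≤ C := h M (Nat.one_le_ceil_iff.2 (inv_pos.2 hs))
    rw [mul_inv_le_iff₀ hsα] at this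
    linarith
  have hsM' : s * (s ^ α) ^ 2 * M ≤ (1 + s) * (s ^ α) ^ 2 := by
    calc s * (s ^ α) ^ 2 * M ≤ s * (s ^ α) ^ 2 * (s⁻¹ + 1) := by gcongr
      _ = (1 + s) * (s ^ α) ^ 2 := by field_simp
  calc penalizedError E D (s * (s ^ α) ^ 2)
      ≤ ((C + 1) * s ^ α) ^ 2 + s * (s ^ α) ^ 2 * M :=
        penalizedError_le_of_approxError_lt hE hi₀ (by positivity) hR
    _ ≤ ((C + 1) ^ 2 + 2) * (s ^ α) ^ 2 := by nlinarith [pow_pos hsα 2]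

theorem div_le_two_mul_succ_div {lam : ℕ → ℝ} (hmono : Monotone lam) {n : ℕ} (hn : 1 ≤ n)
    (hpos : 0 ≤ lam n) : lam n / n ≤ 2 * (lam (n + 1) / ↑(n + 1)) := by
  have hn' : (1 : ℝ) ≤ n := by exact_mod_cast hn
  have hmono' : lam n ≤ lam (n + 1) := hmono n.le_succ
  rw [Nat.cast_succ, div_le_iff₀ (by positivity), mul_comm, ← mul_assoc, mul_div_assoc',
    le_div_iff₀ (by positivity)]
  nlinarith

theorem exists_le_lt_two_mul {a : ℕ → ℝ} (ha : ∀ n, a n ≤ 2 * a (n + 1))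
    (hlim : Tendsto a atTop (𝓝 0)) {t : ℝ} (ht : 0 < t) (ht0 : t < 2 * a 0) :
    ∃ n, a n ≤ t ∧ t < 2 * a n := by
  classical
  have hex : ∃ n, a n ≤ t := (hlim.eventually (ge_mem_nhds ht)).exists
  refine ⟨Nat.find hex, Nat.find_spec hex, ?_⟩
  rcases hn : Nat.find hex with _ | n
  · exact ht0
  · have : t < a n := not_le.1 (Nat.find_min hex (by omega))
    linarith [ha n]

theorem exists_rpow_neg_mul_penalizedError_le_iff {i₀ : ι} (hi₀ : D i₀ = 0) {β : ℝ}
    (hβ : 0 ≤ β) {lam : ℕ → ℝ} (hpos : ∀ n : ℕ, 1 ≤ n → 0 < lam n) (hmono : Monotone lam)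
    (hlim : Tendsto (fun n : ℕ => lam n / n) atTop (𝓝 0)) :
    (∃ C : ℝ, ∀ n : ℕ, 1 ≤ n →
        (lam n / n) ^ (-β) * penalizedError E D (lam n / n) ≤ C) ↔
      ∃ C : ℝ, ∀ t, 0 < t → penalizedError E D t ≤ C * t ^ β := by
  have : Nonempty ι := ⟨i₀⟩
  have hε : ∀ n : ℕ, 1 ≤ n → 0 < lam n / n := fun n hn =>
    div_pos (hpos n hn) (by exact_mod_cast hn)
  have hε₁ := hε 1 le_rfl
  have hscale {t q C : ℝ} (ht : 0 < t) : t ^ (-β) * q ≤ C ↔ q ≤ C * t ^ β := by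
    rw [rpow_neg ht.le, inv_mul_le_iff₀ (rpow_pos_of_pos ht β), mul_comm]
  refine ⟨fun ⟨C, hC⟩ => ?_, fun ⟨C, hC⟩ =>
    ⟨C, fun n hn => (hscale (hε n hn)).2 (hC _ (hε n hn))⟩⟩
  replace hC := fun n hn => (hscale (hε n hn)).1 (hC n hn)
  have hC0 : 0 ≤ C := nonneg_of_mul_nonneg_left
    ((penalizedError_nonneg hε₁.le).trans (hC 1 le_rfl)) (rpow_pos_of_pos hε₁ β)
  refine exists_penalizedError_le_rpow_of_Ioc hi₀ hβ hε₁ (C := 2 * C)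
    fun t ⟨ht, ht1⟩ => ?_
  obtain ⟨k, hk, hk2⟩ := exists_le_lt_two_mul (a := fun k => lam (k + 1) / ↑(k + 1))
    (fun k => div_le_two_mul_succ_div hmono (by omega) (hpos _ (by omega)).le)
    (hlim.comp (tendsto_add_atTop_nat 1)) ht (by simp only [zero_add]; linarith)
  calc penalizedError E D t ≤ 2 * penalizedError E D (lam (k + 1) / ↑(k + 1)) :=
        penalizedError_le_two_mul ht.le hk2.le
    _ ≤ 2 * (C * (lam (k + 1) / ↑(k + 1)) ^ β) := by gcongr; exact hC _ (by omega)
    _ ≤ 2 * C * t ^ β := by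
        rw [← mul_assoc]
        gcongr
        exact (hε _ (by omega)).le

end ModelSelection

open ModelSelection in
theorem stmt_0_general {H : Type*} [NormedAddCommGroup H] [InnerProductSpace ℝ H]
    {ι : Type*} (m : ι → Submodule ℝ H)
    [∀ i, FiniteDimensional ℝ (m i)] (i₀ : ι) (hi₀ : m i₀ = ⊥)
    (s : H) (α : ℝ) (hα : 0 < α)
    (lam : ℕ → ℝ) (hpos : ∀ n : ℕ, 1 ≤ n → 0 < lam n) (hmono : Monotone lam)
    (hlim : Filter.Tendsto (fun n : ℕ => lam n / n) Filter.atTop (nhds 0)) :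
    (∃ C : ℝ, ∀ n : ℕ, 1 ≤ n →
        (lam n / n) ^ (-(2 * α / (1 + 2 * α))) *
          sInf {x : ℝ | ∃ i : ι,
            x = ‖((m i).orthogonalProjectionOnto s : H) - s‖ ^ 2 +
              (lam n / n) * (Module.finrank ℝ (m i) : ℝ)} ≤ C) ↔
    (∃ C : ℝ, ∀ M : ℕ, 1 ≤ M →
        (M : ℝ) ^ α *
          sInf {x : ℝ | ∃ i : ι, Module.finrank ℝ (m i) ≤ M ∧
            x = ‖((m i).orthogonalProjectionOnto s : H) - s‖} ≤ C) := by
  have : Nonempty ι := ⟨i₀⟩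
  have hE : ∀ i, 0 ≤ ‖((m i).orthogonalProjectionOnto s : H) - s‖ := fun _ => norm_nonneg _
  have hD : Module.finrank ℝ (m i₀) = 0 := by simp [hi₀]
  exact (exists_rpow_neg_mul_penalizedError_le_iff
    (E := fun i => ‖((m i).orthogonalProjectionOnto s : H) - s‖) hD
    (β := 2 * α / (1 + 2 * α)) (by positivity) hpos hmono hlim).trans
    ⟨fun ⟨_, hC⟩ => exists_approxError_le_of_penalizedError_le hE hα.le hC,
      fun ⟨_, hC⟩ => exists_penalizedError_le_of_approxError_le hE hD hα.le hC⟩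

/-- characterization of the approximation space `A^α` of a countable
collection of finite-dimensional subspaces containing the zero subspace. -/
theorem stmt_0 {H : Type*} [NormedAddCommGroup H] [InnerProductSpace ℝ H]
    {ι : Type*} [Countable ι] (m : ι → Submodule ℝ H)
    [∀ i, FiniteDimensional ℝ (m i)] (i₀ : ι) (hi₀ : m i₀ = ⊥)
    (s : H) (α : ℝ) (hα : 0 < α)
    (lam : ℕ → ℝ) (hpos : ∀ n : ℕ, 1 ≤ n → 0 < lam n) (hmono : Monotone lam)
    (hdouble : ∀ n : ℕ, 1 ≤ n → lam (2 * n) ≤ 2 * lam n)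
    (hlim : Filter.Tendsto (fun n : ℕ => lam n / n) Filter.atTop (nhds 0)) :
    (∃ C : ℝ, ∀ n : ℕ, 1 ≤ n →
        (lam n / n) ^ (-(2 * α / (1 + 2 * α))) *
          sInf {x : ℝ | ∃ i : ι,
            x = ‖((m i).orthogonalProjectionOnto s : H) - s‖ ^ 2 +
              (lam n / n) * (Module.finrank ℝ (m i) : ℝ)} ≤ C) ↔
    (∃ C : ℝ, ∀ M : ℕ, 1 ≤ M →
        (M : ℝ) ^ α *
          sInf {x : ℝ | ∃ i : ι, Module.finrank ℝ (m i) ≤ M ∧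
            x = ‖((m i).orthogonalProjectionOnto s : H) - s‖} ≤ C) :=
  stmt_0_general m i₀ hi₀ s α hα lam hpos hmono hlim
end

section
/- Let H be a real Hilbert space, ℓ : H → ℝ a linear map, s ∈ H, n ≥ 1 an integer, λ > 0, and M a collection of finite-dimensional subspaces of H. Assume that for all m, m' ∈ M, ‖w_{m+m'}‖² ≤ λ (D_m + D_{m'}), where m+m' is the subspace spanned by m ∪ m'. Let γ ∈ (0,1). Suppose m̂ ∈ M minimizes −‖ŝ_m‖² + (λ/n)·D_m over m ∈ M. Then for every m₀ ∈ M: (λ/n)·(D_{m̂} − D_{m₀}) ≤ (1−γ)^{−1} [ (2/γ + 1)·‖ŝ_{m₀} − s‖² + (2/γ − 1)·‖ŝ_{m̂} − s‖² + 2γ·(λ/n)·D_{m₀} ]. -/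
open scoped RealInnerProductSpace

/-!
With `ε = n^{-1/2}` and `V = m̂ ⊔ m₀`, Pythagoras gives
`‖ŝ_m‖² = ‖s‖² - ‖s - P_m s‖² + 2ε ℓ(P_m s) + ε²‖w_m‖²` and `‖ŝ_m - s‖² = ‖s - P_m s‖² + ε²‖w_m‖²`.
Comparing the criterion at `m̂` and `m₀`, the cross term `ℓ(P_m̂ s - P_m₀ s) = ⟪w_V, P_m̂ s - P_m₀ s⟫`
is at most `(‖s - P_m̂ s‖ + ‖s - P_m₀ s‖) ‖w_V‖`; splitting it by `2xy ≤ (2/γ)x² + (γ/2)y²` and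
bounding `ε²‖w_V‖²` by the noise control `(λ/n)(D_m̂ + D_m₀)` leaves a linear inequality in the
dimensions.
-/

section Projection

variable {H : Type*} [NormedAddCommGroup H] [InnerProductSpace ℝ H]
  {K : Submodule ℝ H} {s p w : H}

lemma norm_add_smul_sq_of_mem_orthogonal (ℓ : H →ₗ[ℝ] ℝ) (hp : p ∈ K) (hsp : s - p ∈ Kᗮ)
    (hℓ : ∀ x ∈ K, ⟪w, x⟫ = ℓ x) (c : ℝ) :
    ‖p + c • w‖ ^ 2 = ‖s‖ ^ 2 - ‖s - p‖ ^ 2 + 2 * c * ℓ p + (c * ‖w‖) ^ 2 := by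
  have hpyth : ‖s‖ ^ 2 = ‖p‖ ^ 2 + ‖s - p‖ ^ 2 := by
    simpa only [add_sub_cancel, sq] using
      norm_add_sq_eq_norm_sq_add_norm_sq_real (Submodule.inner_right_of_mem_orthogonal hp hsp)
  rw [norm_add_sq_real, real_inner_smul_right, real_inner_comm, hℓ p hp, norm_smul,
    Real.norm_eq_abs, mul_pow, sq_abs, mul_pow]
  linarith

lemma norm_add_smul_sub_sq_of_mem_orthogonal (hsp : s - p ∈ Kᗮ) (hw : w ∈ K) (c : ℝ) :
    ‖p + c • w - s‖ ^ 2 = ‖s - p‖ ^ 2 + (c * ‖w‖) ^ 2 := by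
  have horth : ⟪s - p, c • w⟫ = 0 :=
    Submodule.inner_left_of_mem_orthogonal (K.smul_mem c hw) hsp
  rw [show p + c • w - s = -(s - p) + c • w by abel, norm_add_sq_real, inner_neg_left, horth,
    norm_neg, norm_smul, Real.norm_eq_abs, mul_pow, sq_abs, mul_pow]
  ring

lemma map_sub_le_of_inner_eq (ℓ : H →ₗ[ℝ] ℝ) {q : H} (hℓ : ∀ x ∈ K, ⟪w, x⟫ = ℓ x)
    (hp : p ∈ K) (hq : q ∈ K) :
    ℓ p - ℓ q ≤ (‖s - p‖ + ‖s - q‖) * ‖w‖ := by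
  rw [← map_sub, ← hℓ _ (K.sub_mem hp hq)]
  calc ⟪w, p - q⟫ ≤ ‖w‖ * ‖p - q‖ := real_inner_le_norm _ _
    _ ≤ ‖w‖ * (‖s - p‖ + ‖s - q‖) := by
      gcongr
      simpa only [norm_sub_rev p s] using norm_sub_le_norm_sub_add_norm_sub p s q
    _ = (‖s - p‖ + ‖s - q‖) * ‖w‖ := mul_comm _ _

end Projection

lemma rpow_neg_one_half_sq {x : ℝ} (hx : 0 ≤ x) : (x ^ (-(1 / 2 : ℝ))) ^ 2 = x⁻¹ := by
  rw [Real.rpow_neg hx, ← Real.sqrt_eq_rpow, inv_pow, Real.sq_sqrt hx]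

lemma two_mul_mul_le_div_mul_sq_add {γ : ℝ} (hγ : 0 < γ) (x y : ℝ) :
    2 * x * y ≤ 2 / γ * x ^ 2 + γ / 2 * y ^ 2 := by
  have hscaled : γ * (2 / γ * x ^ 2 + γ / 2 * y ^ 2 - 2 * x * y) = (2 * x - γ * y) ^ 2 / 2 := by
    field_simp
    ring
  nlinarith [sq_nonneg (2 * x - γ * y)]

/-- `dh, d0` are the bias and `a, b` the noise terms of the risks at `m̂, m₀`; `t` is the noise
on `m̂ ⊔ m₀`. -/
lemma dimension_gap_le {L Dh D0 dh d0 a b t γ : ℝ} (hγ0 : 0 < γ) (hγ1 : γ < 1)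
    (hcomp : L * (Dh - D0) ≤ d0 ^ 2 - dh ^ 2 + 2 * (dh + d0) * t + a ^ 2 - b ^ 2)
    (hnoise : t ^ 2 ≤ L * (Dh + D0)) :
    L * (Dh - D0) ≤ (1 - γ)⁻¹ * ((2 / γ + 1) * (d0 ^ 2 + b ^ 2) +
      (2 / γ - 1) * (dh ^ 2 + a ^ 2) + 2 * γ * L * D0) := by
  have hh := two_mul_mul_le_div_mul_sq_add hγ0 dh t
  have h0 := two_mul_mul_le_div_mul_sq_add hγ0 d0 t
  have hγt : γ * t ^ 2 ≤ γ * (L * (Dh + D0)) := mul_le_mul_of_nonneg_left hnoise hγ0.le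
  have hinv : 2 ≤ 2 / γ := by rw [le_div_iff₀ hγ0]; linarith
  have ha : 0 ≤ (2 / γ - 2) * a ^ 2 := mul_nonneg (by linarith) (sq_nonneg a)
  have hb : 0 ≤ (2 / γ + 2) * b ^ 2 := mul_nonneg (by linarith) (sq_nonneg b)
  rw [inv_mul_eq_div, le_div_iff₀ (by linarith)]
  linarith

theorem stmt_1_general {H : Type*} [NormedAddCommGroup H] [InnerProductSpace ℝ H]
    (ℓ : H →ₗ[ℝ] ℝ) (s : H) (n : ℕ) (lam : ℝ)
    (M : Set (Submodule ℝ H)) (hfin : ∀ m ∈ M, FiniteDimensional ℝ m)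
    -- `proj V` is the orthogonal projection of `s` onto `V`
    (proj : Submodule ℝ H → H)
    (hproj : ∀ V : Submodule ℝ H, FiniteDimensional ℝ V →
      proj V ∈ V ∧ s - proj V ∈ Vᗮ)
    -- `w V` is the unique vector of `V` representing `ℓ` on `V`
    (w : Submodule ℝ H → H)
    (hw : ∀ V : Submodule ℝ H, FiniteDimensional ℝ V →
      w V ∈ V ∧ ∀ x ∈ V, ⟪w V, x⟫ = ℓ x)
    -- control of the noise on sums of pairs of models
    (hnoise : ∀ m ∈ M, ∀ m' ∈ M,
      ‖w (m ⊔ m')‖ ^ 2 ≤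
        lam * ((Module.finrank ℝ m : ℝ) + (Module.finrank ℝ m' : ℝ)))
    (γ : ℝ) (hγ0 : 0 < γ) (hγ1 : γ < 1)
    -- the least-squares estimators
    (shat : Submodule ℝ H → H)
    (hshat : ∀ m : Submodule ℝ H, shat m = proj m + ((n : ℝ) ^ (-(1 / 2 : ℝ))) • w m)
    -- `mhat` minimizes the penalized criterion
    (mhat : Submodule ℝ H) (hmhat : mhat ∈ M)
    (hminhat : ∀ m ∈ M,
      -‖shat mhat‖ ^ 2 + lam / n * (Module.finrank ℝ mhat : ℝ) ≤
        -‖shat m‖ ^ 2 + lam / n * (Module.finrank ℝ m : ℝ))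
    (m₀ : Submodule ℝ H) (hm₀ : m₀ ∈ M) :
    lam / n * ((Module.finrank ℝ mhat : ℝ) - (Module.finrank ℝ m₀ : ℝ)) ≤
      (1 - γ)⁻¹ * ((2 / γ + 1) * ‖shat m₀ - s‖ ^ 2 +
        (2 / γ - 1) * ‖shat mhat - s‖ ^ 2 +
        2 * γ * (lam / n) * (Module.finrank ℝ m₀ : ℝ)) := by
  have := hfin mhat hmhat
  have := hfin m₀ hm₀
  set ε : ℝ := (n : ℝ) ^ (-(1 / 2 : ℝ))
  have hε : 0 ≤ ε := Real.rpow_nonneg n.cast_nonneg _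
  obtain ⟨hph, hsph⟩ := hproj mhat ‹_›
  obtain ⟨hp0, hsp0⟩ := hproj m₀ ‹_›
  obtain ⟨hwh, hℓh⟩ := hw mhat ‹_›
  obtain ⟨hw0, hℓ0⟩ := hw m₀ ‹_›
  obtain ⟨-, hℓV⟩ := hw (mhat ⊔ m₀) inferInstance
  have hcross := map_sub_le_of_inner_eq ℓ (s := s) hℓV
    (Submodule.mem_sup_left hph) (Submodule.mem_sup_right hp0)
  have hjoint : (ε * ‖w (mhat ⊔ m₀)‖) ^ 2 ≤
      lam / n * (Module.finrank ℝ mhat + Module.finrank ℝ m₀) := by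
    rw [mul_pow, rpow_neg_one_half_sq n.cast_nonneg, inv_mul_eq_div, div_mul_eq_mul_div]
    exact div_le_div_of_nonneg_right (hnoise mhat hmhat m₀ hm₀) n.cast_nonneg
  rw [hshat mhat, hshat m₀, norm_add_smul_sub_sq_of_mem_orthogonal hsph hwh,
    norm_add_smul_sub_sq_of_mem_orthogonal hsp0 hw0]
  refine dimension_gap_le hγ0 hγ1 ?_ hjoint
  have hmin := hminhat m₀ hm₀
  rw [hshat mhat, hshat m₀, norm_add_smul_sq_of_mem_orthogonal ℓ hph hsph hℓh,
    norm_add_smul_sq_of_mem_orthogonal ℓ hp0 hsp0 hℓ0] at hmin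
  linarith [mul_le_mul_of_nonneg_left hcross hε]

/-- the pathwise inequality on the dimensions of the selected model,
valid on the event where the noise projections are controlled. -/
theorem stmt_1 {H : Type*} [NormedAddCommGroup H] [InnerProductSpace ℝ H]
    (ℓ : H →ₗ[ℝ] ℝ) (s : H) (n : ℕ) (hn : 1 ≤ n) (lam : ℝ) (hlam : 0 < lam)
    (M : Set (Submodule ℝ H)) (hfin : ∀ m ∈ M, FiniteDimensional ℝ m)
    -- `proj V` is the orthogonal projection of `s` onto `V`
    (proj : Submodule ℝ H → H)
    (hproj : ∀ V : Submodule ℝ H, FiniteDimensional ℝ V →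
      proj V ∈ V ∧ s - proj V ∈ Vᗮ)
    -- `w V` is the unique vector of `V` representing `ℓ` on `V`
    (w : Submodule ℝ H → H)
    (hw : ∀ V : Submodule ℝ H, FiniteDimensional ℝ V →
      w V ∈ V ∧ ∀ x ∈ V, ⟪w V, x⟫ = ℓ x)
    -- control of the noise on sums of pairs of models
    (hnoise : ∀ m ∈ M, ∀ m' ∈ M,
      ‖w (m ⊔ m')‖ ^ 2 ≤
        lam * ((Module.finrank ℝ m : ℝ) + (Module.finrank ℝ m' : ℝ)))
    (γ : ℝ) (hγ0 : 0 < γ) (hγ1 : γ < 1)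
    -- the least-squares estimators
    (shat : Submodule ℝ H → H)
    (hshat : ∀ m : Submodule ℝ H, shat m = proj m + ((n : ℝ) ^ (-(1 / 2 : ℝ))) • w m)
    -- `mhat` minimizes the penalized criterion
    (mhat : Submodule ℝ H) (hmhat : mhat ∈ M)
    (hminhat : ∀ m ∈ M,
      -‖shat mhat‖ ^ 2 + lam / n * (Module.finrank ℝ mhat : ℝ) ≤
        -‖shat m‖ ^ 2 + lam / n * (Module.finrank ℝ m : ℝ))
    (m₀ : Submodule ℝ H) (hm₀ : m₀ ∈ M) :
    lam / n * ((Module.finrank ℝ mhat : ℝ) - (Module.finrank ℝ m₀ : ℝ)) ≤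
      (1 - γ)⁻¹ * ((2 / γ + 1) * ‖shat m₀ - s‖ ^ 2 +
        (2 / γ - 1) * ‖shat mhat - s‖ ^ 2 +
        2 * γ * (lam / n) * (Module.finrank ℝ m₀ : ℝ)) :=
  stmt_1_general ℓ s n lam M hfin proj hproj w hw hnoise γ hγ0 hγ1 shat hshat mhat hmhat hminhat m₀
    hm₀
end

section
/- Let H be a real Hilbert space, ℓ : H → ℝ a linear map, s ∈ H, n ≥ 1 an integer, λ > 0, and M a collection of finite-dimensional subspaces of H that is totally ordered by inclusion (nested models). Suppose m₀ ∈ M minimizes ‖P_m s − s‖² + λ D_m/(4n) over m ∈ M, and m̂ ∈ M minimizes −‖ŝ_m‖² + λ D_m/n over m ∈ M. Then ‖P_{m₀} s − s‖ ≤ ‖ŝ_{m̂} − s‖. -/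
/-!
If `m̂ ⊆ m₀`, the bias of `m₀` is at most that of `m̂`, which is at most the error of `ŝ_m̂`.
If `m₀ ⊆ m̂`, put `u = P_{m₀} s - P_m̂ s`. The minimality of `m₀` against `m̂` gives
`4 ‖u‖² ≤ λ (D_m̂ - D_{m₀}) / n`, and the minimality of `m̂` against `m₀` bounds this penalty gap
by `‖ŝ_m̂‖² - ‖ŝ_{m₀}‖² = ‖ŝ_m̂ - ŝ_{m₀}‖²`. As `ŝ_m̂ - ŝ_{m₀} = -u + n^{-1/2} (w_m̂ - w_{m₀})`
and `w_m̂ - w_{m₀} ⊥ m₀`, this forces `‖u‖ ≤ n^{-1/2} ‖w_m̂‖`, and Pythagoras concludes: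
`‖P_{m₀} s - s‖² = ‖P_m̂ s - s‖² + ‖u‖² ≤ ‖P_m̂ s - s‖² + n⁻¹ ‖w_m̂‖² = ‖ŝ_m̂ - s‖²`.
-/

open scoped RealInnerProductSpace

theorem norm_le_norm_of_four_mul_sq_le {E : Type*} [SeminormedAddCommGroup E] {u v : E}
    (h : 4 * ‖u‖ ^ 2 ≤ ‖u + v‖ ^ 2) : ‖u‖ ≤ ‖v‖ := by
  have h2 : 2 * ‖u‖ ≤ ‖u + v‖ := (sq_le_sq₀ (by positivity) (norm_nonneg _)).1 (by linarith)
  linarith [norm_add_le u v]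

section

variable {H : Type*} [NormedAddCommGroup H] [InnerProductSpace ℝ H] {V W : Submodule ℝ H}

theorem norm_sub_sq_eq_of_mem_orthogonal {s p x : H} (hp : p ∈ V) (hsp : s - p ∈ Vᗮ)
    (hx : x ∈ V) : ‖x - s‖ ^ 2 = ‖x - p‖ ^ 2 + ‖p - s‖ ^ 2 := by
  have hps : p - s ∈ Vᗮ := by simpa only [neg_sub] using Vᗮ.neg_mem hsp
  rw [← sub_add_sub_cancel x p s, sq, sq, sq]
  exact norm_add_sq_eq_norm_sq_add_norm_sq_real
    (V.inner_right_of_mem_orthogonal (V.sub_mem hx hp) hps)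

theorem norm_sub_le_of_mem_orthogonal {s p x : H} (hp : p ∈ V) (hsp : s - p ∈ Vᗮ)
    (hx : x ∈ V) : ‖p - s‖ ≤ ‖x - s‖ := by
  have h := norm_sub_sq_eq_of_mem_orthogonal hp hsp hx
  exact (sq_le_sq₀ (norm_nonneg _) (norm_nonneg _)).1 (by nlinarith [sq_nonneg ‖x - p‖])

theorem sub_mem_orthogonal_of_inner_eq (hVW : V ≤ W) {f : H → ℝ} {a b : H}
    (ha : ∀ x ∈ V, ⟪a, x⟫ = f x) (hb : ∀ x ∈ W, ⟪b, x⟫ = f x) : b - a ∈ Vᗮ := by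
  rw [Submodule.mem_orthogonal']
  intro x hx
  rw [inner_sub_left, hb x (hVW hx), ha x hx, sub_self]

/-- `p`, `q` stand for `P_V s`, `P_W s`, and `z`, `z'` for the noise terms `n^{-1/2} w_V`,
`n^{-1/2} w_W`. -/
theorem norm_sub_le_norm_add_sub_of_le (hVW : V ≤ W) {s p q z z' : H}
    (hp : p ∈ V) (hsp : s - p ∈ Vᗮ) (hq : q ∈ W) (hsq : s - q ∈ Wᗮ)
    (hz : z ∈ V) (hz' : z' ∈ W) (hzz' : z' - z ∈ Vᗮ)
    (hgap : 4 * (‖p - s‖ ^ 2 - ‖q - s‖ ^ 2) ≤ ‖q + z'‖ ^ 2 - ‖p + z‖ ^ 2) :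
    ‖p - s‖ ≤ ‖q + z' - s‖ := by
  have hbias : ‖p - s‖ ^ 2 = ‖p - q‖ ^ 2 + ‖q - s‖ ^ 2 :=
    norm_sub_sq_eq_of_mem_orthogonal hq hsq (hVW hp)
  have herror : ‖q + z' - s‖ ^ 2 = ‖z'‖ ^ 2 + ‖q - s‖ ^ 2 := by
    simpa only [add_sub_cancel_left] using
      norm_sub_sq_eq_of_mem_orthogonal hq hsq (W.add_mem hq hz')
  have hqp : q - p ∈ Vᗮ := by
    simpa only [sub_sub_sub_cancel_left] using Vᗮ.sub_mem hsp (Submodule.orthogonal_le hVW hsq)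
  have hdiff : q + z' - (p + z) ∈ Vᗮ := by
    simpa only [add_sub_add_comm] using Vᗮ.add_mem hqp hzz'
  have hest : ‖q + z'‖ ^ 2 = ‖p + z‖ ^ 2 + ‖(p - q) + (z - z')‖ ^ 2 := by
    simpa only [zero_sub, norm_neg, add_sub_add_comm] using
      norm_sub_sq_eq_of_mem_orthogonal (V.add_mem hp hz) hdiff V.zero_mem
  have hnoise : ‖z - z'‖ ≤ ‖z'‖ := by
    simpa only [zero_sub, norm_neg] using norm_sub_le_of_mem_orthogonal hz hzz' V.zero_mem
  have hu : ‖p - q‖ ≤ ‖z'‖ :=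
    (norm_le_norm_of_four_mul_sq_le (by linarith)).trans hnoise
  have hu2 : ‖p - q‖ ^ 2 ≤ ‖z'‖ ^ 2 := pow_le_pow_left₀ (norm_nonneg _) hu 2
  exact (sq_le_sq₀ (norm_nonneg _) (norm_nonneg _)).1 (by linarith)

end

theorem stmt_3_general {H : Type*} [NormedAddCommGroup H] [InnerProductSpace ℝ H]
    (ℓ : H →ₗ[ℝ] ℝ) (s : H) (n : ℕ) (lam : ℝ)
    (M : Set (Submodule ℝ H)) (hfin : ∀ m ∈ M, FiniteDimensional ℝ m)
    -- the collection is totally ordered by inclusion (nested models)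
    (hnested : ∀ m ∈ M, ∀ m' ∈ M, m ≤ m' ∨ m' ≤ m)
    -- `proj V` is the orthogonal projection of `s` onto `V`
    (proj : Submodule ℝ H → H)
    (hproj : ∀ V : Submodule ℝ H, FiniteDimensional ℝ V →
      proj V ∈ V ∧ s - proj V ∈ Vᗮ)
    -- `w V` is the unique vector of `V` representing `ℓ` on `V`
    (w : Submodule ℝ H → H)
    (hw : ∀ V : Submodule ℝ H, FiniteDimensional ℝ V →
      w V ∈ V ∧ ∀ x ∈ V, ⟪w V, x⟫ = ℓ x)
    -- the least-squares estimators
    (shat : Submodule ℝ H → H)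
    (hshat : ∀ m : Submodule ℝ H, shat m = proj m + ((n : ℝ) ^ (-(1 / 2 : ℝ))) • w m)
    -- `m₀` minimizes the deterministic criterion with penalty `λ D_m/(4n)`
    (m₀ : Submodule ℝ H) (hm₀ : m₀ ∈ M)
    (hminm₀ : ∀ m ∈ M,
      ‖proj m₀ - s‖ ^ 2 + lam * (Module.finrank ℝ m₀ : ℝ) / (4 * n) ≤
        ‖proj m - s‖ ^ 2 + lam * (Module.finrank ℝ m : ℝ) / (4 * n))
    -- `mhat` minimizes the penalized empirical criterion
    (mhat : Submodule ℝ H) (hmhat : mhat ∈ M)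
    (hminhat : ∀ m ∈ M,
      -‖shat mhat‖ ^ 2 + lam * (Module.finrank ℝ mhat : ℝ) / n ≤
        -‖shat m‖ ^ 2 + lam * (Module.finrank ℝ m : ℝ) / n) :
    ‖proj m₀ - s‖ ≤ ‖shat mhat - s‖ := by
  set c : ℝ := (n : ℝ) ^ (-(1 / 2 : ℝ))
  obtain ⟨hp₀, hsp₀⟩ := hproj m₀ (hfin m₀ hm₀)
  obtain ⟨hp, hsp⟩ := hproj mhat (hfin mhat hmhat)
  obtain ⟨hw₀, hℓ₀⟩ := hw m₀ (hfin m₀ hm₀)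
  obtain ⟨hw', hℓ⟩ := hw mhat (hfin mhat hmhat)
  simp only [hshat] at hminhat ⊢
  rcases hnested m₀ hm₀ mhat hmhat with hle | hle
  · have hnoise : c • w mhat - c • w m₀ ∈ m₀ᗮ := by
      simpa only [smul_sub] using
        Submodule.smul_mem _ c (sub_mem_orthogonal_of_inner_eq hle hℓ₀ hℓ)
    refine norm_sub_le_norm_add_sub_of_le hle hp₀ hsp₀ hp hsp (m₀.smul_mem c hw₀)
      (mhat.smul_mem c hw') hnoise ?_
    have hpen : lam * (Module.finrank ℝ mhat : ℝ) / (4 * n) * 4 =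
        lam * (Module.finrank ℝ mhat : ℝ) / n := by ring
    have hpen₀ : lam * (Module.finrank ℝ m₀ : ℝ) / (4 * n) * 4 =
        lam * (Module.finrank ℝ m₀ : ℝ) / n := by ring
    linarith [hminm₀ mhat hmhat, hminhat m₀ hm₀]
  · calc ‖proj m₀ - s‖ ≤ ‖proj mhat - s‖ := norm_sub_le_of_mem_orthogonal hp₀ hsp₀ (hle hp)
      _ ≤ ‖proj mhat + c • w mhat - s‖ :=
        norm_sub_le_of_mem_orthogonal hp hsp (mhat.add_mem hp (mhat.smul_mem c hw'))

/-- the nested-models lemma: pathwise, the bias of the deterministic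
minimizer is dominated by the error of the penalized least-squares estimator. -/
theorem stmt_3 {H : Type*} [NormedAddCommGroup H] [InnerProductSpace ℝ H]
    (ℓ : H →ₗ[ℝ] ℝ) (s : H) (n : ℕ) (hn : 1 ≤ n) (lam : ℝ) (hlam : 0 < lam)
    (M : Set (Submodule ℝ H)) (hfin : ∀ m ∈ M, FiniteDimensional ℝ m)
    -- the collection is totally ordered by inclusion (nested models)
    (hnested : ∀ m ∈ M, ∀ m' ∈ M, m ≤ m' ∨ m' ≤ m)
    -- `proj V` is the orthogonal projection of `s` onto `V`
    (proj : Submodule ℝ H → H)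
    (hproj : ∀ V : Submodule ℝ H, FiniteDimensional ℝ V →
      proj V ∈ V ∧ s - proj V ∈ Vᗮ)
    -- `w V` is the unique vector of `V` representing `ℓ` on `V`
    (w : Submodule ℝ H → H)
    (hw : ∀ V : Submodule ℝ H, FiniteDimensional ℝ V →
      w V ∈ V ∧ ∀ x ∈ V, ⟪w V, x⟫ = ℓ x)
    -- the least-squares estimators
    (shat : Submodule ℝ H → H)
    (hshat : ∀ m : Submodule ℝ H, shat m = proj m + ((n : ℝ) ^ (-(1 / 2 : ℝ))) • w m)
    -- `m₀` minimizes the deterministic criterion with penalty `λ D_m/(4n)`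
    (m₀ : Submodule ℝ H) (hm₀ : m₀ ∈ M)
    (hminm₀ : ∀ m ∈ M,
      ‖proj m₀ - s‖ ^ 2 + lam * (Module.finrank ℝ m₀ : ℝ) / (4 * n) ≤
        ‖proj m - s‖ ^ 2 + lam * (Module.finrank ℝ m : ℝ) / (4 * n))
    -- `mhat` minimizes the penalized empirical criterion
    (mhat : Submodule ℝ H) (hmhat : mhat ∈ M)
    (hminhat : ∀ m ∈ M,
      -‖shat mhat‖ ^ 2 + lam * (Module.finrank ℝ mhat : ℝ) / n ≤
        -‖shat m‖ ^ 2 + lam * (Module.finrank ℝ m : ℝ) / n) :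
    ‖proj m₀ - s‖ ≤ ‖shat mhat - s‖ :=
  stmt_3_general ℓ s n lam M hfin hnested proj hproj w hw shat hshat m₀ hm₀ hminm₀ mhat hmhat
    hminhat
end

section
/- Let H be a real Hilbert space, (φ_i)_{i∈I} a Hilbert (orthonormal) basis of H, I_m a finite subset of I, and J an arbitrary subset of I. Let m be the subspace spanned by {φ_i : i ∈ I_m}, let m'' be the subspace spanned by {φ_i : i ∈ I_m ∩ J}, and let V be the closed subspace generated by {φ_i : i ∈ J}. Then for every s ∈ H: ‖P_{m''} s − s‖² ≤ ‖P_V s − s‖² + ‖P_m s − s‖². -/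
/-!
Put `w = q - qm`. It lies in `m` and is orthogonal to `m''`; since a basis vector `φ j` with
`j ∈ J` either lies in `m''` (if `j ∈ Im`) or is orthogonal to `m` (if `j ∉ Im`), `w` is
orthogonal to `V`. Hence `qV - s - w` is orthogonal to `w`, so `‖w‖ ≤ ‖qV - s‖`, and Pythagoras
for `q - s = w + (qm - s)` gives the inequality.
-/

open Submodule
open scoped InnerProductSpace

section

variable {𝕜 E : Type*} [RCLike 𝕜] [NormedAddCommGroup E] [InnerProductSpace 𝕜 E]

theorem norm_sq_le_of_inner_sub_eq_zero {w x : E} (h : ⟪w, x - w⟫_𝕜 = 0) :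
    ‖w‖ ^ 2 ≤ ‖x‖ ^ 2 := by
  have := norm_add_sq_eq_norm_sq_add_norm_sq_of_inner_eq_zero w (x - w) h
  rw [add_sub_cancel] at this
  nlinarith [norm_nonneg (x - w)]

theorem Orthonormal.mem_orthogonal_span_image_of_mem_orthogonal_inter {ι : Type*} {v : ι → E}
    (hv : Orthonormal 𝕜 v) {A B : Set ι} {w : E} (hwA : w ∈ span 𝕜 (v '' A))
    (hw : w ∈ (span 𝕜 (v '' (A ∩ B)))ᗮ) : w ∈ (span 𝕜 (v '' B))ᗮ := by
  rw [← span_singleton_le_iff_mem, ← isOrtho_iff_le, isOrtho_comm, isOrtho_span]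
  rintro _ ⟨j, hjB, rfl⟩ _ rfl
  by_cases hjA : j ∈ A
  · exact inner_right_of_mem_orthogonal
      (subset_span (Set.mem_image_of_mem v (Set.mem_inter hjA hjB))) hw
  · have hA : span 𝕜 (v '' A) ⟂ span 𝕜 {v j} := by
      rw [isOrtho_span]
      rintro _ ⟨i, hiA, rfl⟩ _ rfl
      exact hv.2 (ne_of_mem_of_not_mem hiA hjA)
    exact inner_left_of_mem_orthogonal hwA (isOrtho_iff_le.mp hA.symm (mem_span_singleton_self _))

variable {K L V : Submodule 𝕜 E} {s q qV qK : E}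

theorem norm_sub_sq_le_of_inf_orthogonal_le (hLK : L ≤ K) (hKLV : K ⊓ Lᗮ ≤ Vᗮ)
    (hq : q ∈ L ∧ s - q ∈ Lᗮ) (hqV : qV ∈ V ∧ s - qV ∈ Vᗮ) (hqK : qK ∈ K ∧ s - qK ∈ Kᗮ) :
    ‖q - s‖ ^ 2 ≤ ‖qV - s‖ ^ 2 + ‖qK - s‖ ^ 2 := by
  set w := q - qK
  have hwK : w ∈ K := sub_mem (hLK hq.1) hqK.1
  have hwL : w ∈ Lᗮ := by
    simpa [w] using sub_mem (orthogonal_le hLK hqK.2) hq.2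
  have hwV : w ∈ Vᗮ := hKLV ⟨hwK, hwL⟩
  have hpyth : ‖q - s‖ ^ 2 = ‖w‖ ^ 2 + ‖qK - s‖ ^ 2 := by
    have h := norm_add_sq_eq_norm_sq_add_norm_sq_of_inner_eq_zero (𝕜 := 𝕜) w (qK - s) ?_
    · rw [sub_add_sub_cancel] at h
      simpa only [sq] using h
    refine inner_right_of_mem_orthogonal hwK ?_
    simpa using neg_mem hqK.2
  have hw_le : ‖w‖ ^ 2 ≤ ‖qV - s‖ ^ 2 := by
    refine norm_sq_le_of_inner_sub_eq_zero (𝕜 := 𝕜) ?_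
    have : qV - s - w = (qV - q) - (s - qK) := by simp only [w]; abel
    rw [this, inner_sub_right, inner_sub_right, inner_right_of_mem_orthogonal hwK hqK.2,
      inner_left_of_mem_orthogonal hq.1 hwL, inner_left_of_mem_orthogonal hqV.1 hwV]
    simp
  linarith

end

theorem stmt_5_general {H : Type*} [NormedAddCommGroup H] [InnerProductSpace ℝ H]
    {I : Type*} (φ : HilbertBasis I ℝ H) (Im : Finset I) (J : Set I)
    (m m'' V : Submodule ℝ H)
    (hm : m = Submodule.span ℝ (φ '' (Im : Set I)))
    (hm'' : m'' = Submodule.span ℝ (φ '' ((Im : Set I) ∩ J)))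
    (hV : V = (Submodule.span ℝ (φ '' J)).topologicalClosure)
    (s : H)
    -- the orthogonal projections of `s` onto `m''`, `V` and `m`
    (q qV qm : H)
    (hq : q ∈ m'' ∧ s - q ∈ m''ᗮ)
    (hqV : qV ∈ V ∧ s - qV ∈ Vᗮ)
    (hqm : qm ∈ m ∧ s - qm ∈ mᗮ) :
    ‖q - s‖ ^ 2 ≤ ‖qV - s‖ ^ 2 + ‖qm - s‖ ^ 2 := by
  subst hm hm'' hV
  refine norm_sub_sq_le_of_inf_orthogonal_le
    (span_mono (Set.image_mono Set.inter_subset_left)) ?_ hq hqV hqm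
  rintro w ⟨hwm, hwm''⟩
  rw [orthogonal_closure]
  exact φ.orthonormal.mem_orthogonal_span_image_of_mem_orthogonal_inter hwm hwm''

/-- the truncation inequality: projecting on the truncated model `m''`
(spanned by the basis vectors of `m` whose index lies in `J`) loses at most the linear
approximation error on `V` plus the approximation error on `m`. -/
theorem stmt_5 {H : Type*} [NormedAddCommGroup H] [InnerProductSpace ℝ H] [CompleteSpace H]
    {I : Type*} (φ : HilbertBasis I ℝ H) (Im : Finset I) (J : Set I)
    (m m'' V : Submodule ℝ H)
    (hm : m = Submodule.span ℝ (φ '' (Im : Set I)))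
    (hm'' : m'' = Submodule.span ℝ (φ '' ((Im : Set I) ∩ J)))
    (hV : V = (Submodule.span ℝ (φ '' J)).topologicalClosure)
    (s : H)
    -- the orthogonal projections of `s` onto `m''`, `V` and `m`
    (q qV qm : H)
    (hq : q ∈ m'' ∧ s - q ∈ m''ᗮ)
    (hqV : qV ∈ V ∧ s - qV ∈ Vᗮ)
    (hqm : qm ∈ m ∧ s - qm ∈ mᗮ) :
    ‖q - s‖ ^ 2 ≤ ‖qV - s‖ ^ 2 + ‖qm - s‖ ^ 2 :=
  stmt_5_general φ Im J m m'' V hm hm'' hV s q qV qm hq hqV hqm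
end

section
/- Let α > 0 and let β be a coefficient array. Let (λ_n)_{n≥1} be a nondecreasing sequence of positive reals with λ_n ≤ n, λ_{2n} ≤ 2 λ_n for all n ≥ 1, and λ_n / n → 0 as n → ∞; for each n ≥ 1 let j₀(n) be the unique natural number with 2^{j₀(n)} ≤ n/λ_n < 2^{j₀(n)+1}. Then sup_{n≥1} (n/λ_n)^{2α/(1+2α)} · Σ_{j ≥ j₀(n)} Σ_{k=0}^{2^j−1} β_{j,k}² < ∞ if and only if sup_{J∈ℕ} 2^{2Jα/(1+2α)} · Σ_{j ≥ J} Σ_{k=0}^{2^j−1} β_{j,k}² < ∞. -/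
/-!
With `F n = n / λ_n` we have `2 ^ j₀(n) ≤ F n < 2 · 2 ^ j₀(n)`, so the two weights agree up to
the factor `2 ^ γ` (`γ = 2α / (1 + 2α)`) along `J = j₀(n)`; this gives one implication. For the
other, every `J` must be of the form `j₀(n)` up to finitely many exceptions: monotonicity of `λ`
gives `F (n + 1) ≤ 2 F n`, so `j₀` increases by at most one per step, and `λ_n / n → 0` makes it
unbounded.
-/
open scoped BigOperators

/-- A coefficient array `β` is square-summable if `Σ_{j,k} β_{j,k}² < ∞`. -/
def SqSummable (β : ℕ → ℕ → ℝ) : Prop :=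
  Summable fun j : ℕ => ∑ k ∈ Finset.range (2 ^ j), (β j k) ^ 2

/-- The condition `B^{α/(1+2α)}_{2,∞}`. -/
def CondB2 (β : ℕ → ℕ → ℝ) (α : ℝ) : Prop :=
  ∃ C : ℝ, ∀ J : ℕ,
    (2 : ℝ) ^ (2 * (J : ℝ) * α / (1 + 2 * α)) *
      ∑' j : ℕ, (if J ≤ j then ∑ k ∈ Finset.range (2 ^ j), (β j k) ^ 2 else 0) ≤ C

open Filter Topology

theorem Nat.exists_eq_of_map_succ_le_succ {h : ℕ → ℕ} {a J : ℕ}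
    (hstep : ∀ m, a ≤ m → h (m + 1) ≤ h m + 1) (ha : h a ≤ J) :
    ∀ b, a ≤ b → J ≤ h b → ∃ m, a ≤ m ∧ h m = J := by
  intro b hab
  induction b, hab using Nat.le_induction with
  | base => exact fun hJ => ⟨a, le_rfl, le_antisymm ha hJ⟩
  | succ b hab ih =>
    intro hJ
    by_cases hb : J ≤ h b
    · exact ih hb
    · have := hstep b hab
      exact ⟨b + 1, by omega, by omega⟩

theorem exists_forall_le_of_forall_ge_le {u : ℕ → ℝ} {N : ℕ} {C : ℝ}
    (hC : ∀ J, N ≤ J → u J ≤ C) : ∃ C', ∀ J, u J ≤ C' := by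
  obtain ⟨D, hD⟩ := ((Set.finite_Iio N).image u).bddAbove
  refine ⟨max C D, fun J => ?_⟩
  rcases lt_or_ge J N with hJ | hJ
  · exact (hD ⟨J, hJ, rfl⟩).trans (le_max_right _ _)
  · exact (hC J hJ).trans (le_max_left _ _)

theorem two_rpow_mul_div_eq (J : ℕ) (α : ℝ) :
    (2 : ℝ) ^ (2 * (J : ℝ) * α / (1 + 2 * α)) = ((2 : ℝ) ^ J) ^ (2 * α / (1 + 2 * α)) := by
  rw [← Real.rpow_natCast, ← Real.rpow_mul zero_le_two]
  ring_nf

def IsDyadicIndex (F : ℕ → ℝ) (j : ℕ → ℕ) : Prop :=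
  ∀ n, 1 ≤ n → (2 : ℝ) ^ j n ≤ F n ∧ F n < 2 ^ (j n + 1)

namespace IsDyadicIndex

variable {F : ℕ → ℝ} {j : ℕ → ℕ} {T : ℕ → ℝ} {γ C : ℝ}

theorem rpow_mul_le (hj : IsDyadicIndex F j) (hγ : 0 ≤ γ) (hT : ∀ J, 0 ≤ T J)
    (hC : ∀ J, ((2 : ℝ) ^ J) ^ γ * T J ≤ C) (n : ℕ) (hn : 1 ≤ n) :
    F n ^ γ * T (j n) ≤ 2 ^ γ * C := by
  have hF : 0 ≤ F n := (pow_nonneg zero_le_two _).trans (hj n hn).1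
  calc F n ^ γ * T (j n) ≤ ((2 : ℝ) ^ (j n + 1)) ^ γ * T (j n) :=
        mul_le_mul_of_nonneg_right (Real.rpow_le_rpow hF (hj n hn).2.le hγ) (hT _)
    _ = 2 ^ γ * (((2 : ℝ) ^ j n) ^ γ * T (j n)) := by
        rw [pow_succ, Real.mul_rpow (by positivity) zero_le_two]
        ring
    _ ≤ 2 ^ γ * C := by gcongr; exact hC _

theorem exists_two_pow_rpow_mul_le {N : ℕ} (hj : IsDyadicIndex F j) (hγ : 0 ≤ γ)
    (hT : ∀ J, 0 ≤ T J) (hsurj : ∀ J, N ≤ J → ∃ n, 1 ≤ n ∧ j n = J)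
    (hC : ∀ n, 1 ≤ n → F n ^ γ * T (j n) ≤ C) :
    ∃ C', ∀ J, ((2 : ℝ) ^ J) ^ γ * T J ≤ C' := by
  refine exists_forall_le_of_forall_ge_le (N := N) (C := C) fun J hJ => ?_
  obtain ⟨n, hn, rfl⟩ := hsurj J hJ
  calc ((2 : ℝ) ^ j n) ^ γ * T (j n) ≤ F n ^ γ * T (j n) :=
        mul_le_mul_of_nonneg_right (Real.rpow_le_rpow (by positivity) (hj n hn).1 hγ) (hT _)
    _ ≤ C := hC n hn

variable {lam : ℕ → ℝ}

theorem pos (hj : IsDyadicIndex (fun n : ℕ => n / lam n) j) {n : ℕ} (hn : 1 ≤ n) :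
    0 < lam n := by
  have : 0 < (n : ℝ) / lam n := lt_of_lt_of_le (by positivity) (hj n hn).1
  exact (div_pos_iff_of_pos_left (by positivity)).mp this

theorem succ_le (hj : IsDyadicIndex (fun n : ℕ => n / lam n) j) (hmono : Monotone lam)
    {n : ℕ} (hn : 1 ≤ n) : j (n + 1) ≤ j n + 1 := by
  have hn' : (1 : ℝ) ≤ n := by exact_mod_cast hn
  have hscale : ((n + 1 : ℕ) : ℝ) / lam (n + 1) ≤ 2 * (n / lam n) := by
    rw [mul_div_assoc', Nat.cast_succ]
    exact div_le_div₀ (by positivity) (by linarith) (hj.pos hn) (hmono n.le_succ)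
  have : (2 : ℝ) ^ j (n + 1) < 2 ^ (j n + 2) :=
    calc (2 : ℝ) ^ j (n + 1) ≤ ((n + 1 : ℕ) : ℝ) / lam (n + 1) := (hj _ (by omega)).1
      _ ≤ 2 * (n / lam n) := hscale
      _ < 2 * 2 ^ (j n + 1) := by linarith [(hj n hn).2]
      _ = 2 ^ (j n + 2) := by ring
  have := (pow_lt_pow_iff_right₀ one_lt_two).mp this
  omega

theorem tendsto_atTop (hj : IsDyadicIndex (fun n : ℕ => n / lam n) j)
    (hlim : Tendsto (fun n : ℕ => lam n / n) atTop (𝓝 0)) :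
    Tendsto (fun n : ℕ => (n : ℝ) / lam n) atTop atTop := by
  have : Tendsto (fun n : ℕ => lam n / n) atTop (𝓝[>] 0) := by
    refine tendsto_nhdsWithin_iff.2 ⟨hlim, ?_⟩
    filter_upwards [eventually_ge_atTop 1] with n hn
    exact div_pos (hj.pos hn) (by positivity)
  simpa only [Pi.inv_def, inv_div] using this.inv_tendsto_nhdsGT_zero

theorem exists_eq (hj : IsDyadicIndex (fun n : ℕ => n / lam n) j) (hmono : Monotone lam)
    (hlim : Tendsto (fun n : ℕ => lam n / n) atTop (𝓝 0)) (J : ℕ) (hJ : j 1 ≤ J) :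
    ∃ n, 1 ≤ n ∧ j n = J := by
  obtain ⟨b, hbJ, hb⟩ := (((hj.tendsto_atTop hlim).eventually_ge_atTop
    ((2 : ℝ) ^ J)).and (eventually_ge_atTop 1)).exists
  have := (pow_lt_pow_iff_right₀ one_lt_two).mp (hbJ.trans_lt (hj b hb).2)
  exact Nat.exists_eq_of_map_succ_le_succ (fun m hm => hj.succ_le hmono hm) hJ b hb (by omega)

end IsDyadicIndex

theorem stmt_6_general (α : ℝ) (hα : 0 < α) (β : ℕ → ℕ → ℝ)
    (lam : ℕ → ℝ)
    (hmono : Monotone lam)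
    (hlim : Filter.Tendsto (fun n : ℕ => lam n / n) Filter.atTop (nhds 0))
    (j₀ : ℕ → ℕ)
    (hj₀ : ∀ n : ℕ, 1 ≤ n →
      (2 : ℝ) ^ (j₀ n) ≤ (n : ℝ) / lam n ∧ (n : ℝ) / lam n < 2 ^ (j₀ n + 1)) :
    (∃ C : ℝ, ∀ n : ℕ, 1 ≤ n →
        ((n : ℝ) / lam n) ^ (2 * α / (1 + 2 * α)) *
          ∑' j : ℕ,
            (if j₀ n ≤ j then ∑ k ∈ Finset.range (2 ^ j), (β j k) ^ 2 else 0) ≤ C) ↔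
      CondB2 β α := by
  have hj : IsDyadicIndex (fun n : ℕ => n / lam n) j₀ := hj₀
  set T : ℕ → ℝ := fun J =>
    ∑' j : ℕ, if J ≤ j then ∑ k ∈ Finset.range (2 ^ j), (β j k) ^ 2 else 0
  have hT : ∀ J, 0 ≤ T J := fun J => tsum_nonneg fun j => by positivity
  have hγ : 0 ≤ 2 * α / (1 + 2 * α) := by positivity
  simp only [CondB2, two_rpow_mul_div_eq]
  constructor
  · rintro ⟨C, hC⟩
    exact hj.exists_two_pow_rpow_mul_le (T := T) hγ hT (hj.exists_eq hmono hlim) hC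
  · rintro ⟨C, hC⟩
    exact ⟨_, hj.rpow_mul_le (T := T) hγ hT hC⟩

/-- identification of the linear approximation space `L^α_V` with the
Besov space `B^{α/(1+2α)}_{2,∞}`. -/
theorem stmt_6 (α : ℝ) (hα : 0 < α) (β : ℕ → ℕ → ℝ) (hβ : SqSummable β)
    (lam : ℕ → ℝ) (hpos : ∀ n : ℕ, 1 ≤ n → 0 < lam n)
    (hle : ∀ n : ℕ, 1 ≤ n → lam n ≤ n)
    (hmono : Monotone lam)
    (hdouble : ∀ n : ℕ, 1 ≤ n → lam (2 * n) ≤ 2 * lam n)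
    (hlim : Filter.Tendsto (fun n : ℕ => lam n / n) Filter.atTop (nhds 0))
    (j₀ : ℕ → ℕ)
    (hj₀ : ∀ n : ℕ, 1 ≤ n →
      (2 : ℝ) ^ (j₀ n) ≤ (n : ℝ) / lam n ∧ (n : ℝ) / lam n < 2 ^ (j₀ n + 1)) :
    (∃ C : ℝ, ∀ n : ℕ, 1 ≤ n →
        ((n : ℝ) / lam n) ^ (2 * α / (1 + 2 * α)) *
          ∑' j : ℕ,
            (if j₀ n ≤ j then ∑ k ∈ Finset.range (2 ^ j), (β j k) ^ 2 else 0) ≤ C) ↔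
      CondB2 β α :=
  stmt_6_general α hα β lam hmono hlim j₀ hj₀
end

section
/- Let α > 0. The coefficient array β defined by β_{j,k} = 2^{−j/2} if k < 2^{j/(1+2α)} and β_{j,k} = 0 otherwise is square-summable and satisfies the condition B^{α/(1+2α)}_{2,∞}. -/
open scoped BigOperators

/-!
At level `j` the array has at most `2^{j/(1+2α)} + 1 ≤ 2 · 2^{j/(1+2α)}` nonzero entries, each with
square `2^{-j}`, so the level energy `Σ_k β_{j,k}²` is at most `2 · r^j` with
`r = 2^{-2α/(1+2α)} < 1`. Summing the geometric tail from `J` on gives `2 r^J / (1 - r)`, and the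
weight `2^{2Jα/(1+2α)}` is exactly `r^{-J}`.
-/

open Finset

noncomputable def levelEnergy (β : ℕ → ℕ → ℝ) (j : ℕ) : ℝ :=
  ∑ k ∈ range (2 ^ j), β j k ^ 2

theorem levelEnergy_nonneg (β : ℕ → ℕ → ℝ) (j : ℕ) : 0 ≤ levelEnergy β j :=
  sum_nonneg fun _ _ => sq_nonneg _

theorem tsum_tail_le_of_le_geometric {e : ℕ → ℝ} {C r : ℝ} (he : ∀ j, 0 ≤ e j) (hr0 : 0 ≤ r)
    (hr1 : r < 1) (hle : ∀ j, e j ≤ C * r ^ j) (J : ℕ) :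
    ∑' j, (if J ≤ j then e j else 0) ≤ C * r ^ J / (1 - r) := by
  have hgeom : Summable fun j => C * r ^ j := (summable_geometric_of_lt_one hr0 hr1).mul_left C
  have htail : Summable fun j => if J ≤ j then e j else 0 :=
    (hgeom.of_nonneg_of_le he hle).of_nonneg_of_le
      (fun j => by split_ifs <;> simp [he j]) (fun j => by split_ifs <;> simp [he j])
  have hhead : ∑ i ∈ range J, (if J ≤ i then e i else 0) = 0 :=
    sum_eq_zero fun i hi => if_neg (by simpa using hi)
  rw [← htail.sum_add_tsum_nat_add J, hhead, zero_add]
  calc ∑' i, (if J ≤ i + J then e (i + J) else 0)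
      = ∑' i, e (i + J) := by simp
    _ ≤ ∑' i, C * r ^ J * r ^ i :=
        ((summable_nat_add_iff J).2 (hgeom.of_nonneg_of_le he hle)).tsum_le_tsum
          (fun i => by rw [mul_assoc, ← pow_add, add_comm]; exact hle _)
          ((summable_geometric_of_lt_one hr0 hr1).mul_left _)
    _ = C * r ^ J / (1 - r) := by
        rw [tsum_mul_left, tsum_geometric_of_lt_one hr0 hr1, div_eq_mul_inv]

theorem sqSummable_and_condB2_of_levelEnergy_le {β : ℕ → ℕ → ℝ} {α C : ℝ} (hα : 0 < α)
    (hβ : ∀ j : ℕ, levelEnergy β j ≤ C * (2 : ℝ) ^ (-(2 * α / (1 + 2 * α)) * j)) :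
    SqSummable β ∧ CondB2 β α := by
  set s := 2 * α / (1 + 2 * α)
  have hs : 0 < s := by positivity
  set r : ℝ := 2 ^ (-s)
  have hr0 : 0 ≤ r := by positivity
  have hr1 : r < 1 := Real.rpow_lt_one_of_one_lt_of_neg one_lt_two (neg_neg_of_pos hs)
  have hgeom (j : ℕ) : levelEnergy β j ≤ C * r ^ j := by
    rw [← Real.rpow_mul_natCast zero_le_two]
    exact hβ j
  refine ⟨((summable_geometric_of_lt_one hr0 hr1).mul_left C).of_nonneg_of_le
    (levelEnergy_nonneg β) hgeom, C / (1 - r), fun J => ?_⟩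
  calc (2 : ℝ) ^ (2 * (J : ℝ) * α / (1 + 2 * α)) * ∑' j, (if J ≤ j then levelEnergy β j else 0)
      ≤ 2 ^ (s * J) * (C * r ^ J / (1 - r)) := by
        rw [show 2 * (J : ℝ) * α / (1 + 2 * α) = s * J by ring]
        gcongr
        exact tsum_tail_le_of_le_geometric (levelEnergy_nonneg β) hr0 hr1 hgeom J
    _ = C / (1 - r) := by
        rw [← Real.rpow_mul_natCast zero_le_two, neg_mul, Real.rpow_neg zero_le_two]
        field_simp

theorem card_filter_natCast_lt_le (n : ℕ) {x : ℝ} (hx : 0 ≤ x) :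
    (#((range n).filter fun k : ℕ => (k : ℝ) < x) : ℝ) ≤ x + 1 := by
  have hsub : (range n).filter (fun k : ℕ => (k : ℝ) < x) ⊆ range ⌈x⌉₊ := fun k hk => by
    simp only [mem_filter, mem_range] at hk ⊢
    exact Nat.lt_ceil.2 hk.2
  calc (#((range n).filter fun k : ℕ => (k : ℝ) < x) : ℝ) ≤ ⌈x⌉₊ := by
        exact_mod_cast (card_le_card hsub).trans (card_range _).le
    _ ≤ x + 1 := (Nat.ceil_lt_add_one hx).le

theorem levelEnergy_le_of_eq_ite {α : ℝ} (hα : 0 < 1 + 2 * α) {β : ℕ → ℕ → ℝ}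
    (hβdef : ∀ j k : ℕ, β j k =
      if (k : ℝ) < (2 : ℝ) ^ ((j : ℝ) / (1 + 2 * α)) then (2 : ℝ) ^ (-(j : ℝ) / 2) else 0)
    (j : ℕ) : levelEnergy β j ≤ 2 * (2 : ℝ) ^ (-(2 * α / (1 + 2 * α)) * j) := by
  set x : ℝ := 2 ^ ((j : ℝ) / (1 + 2 * α))
  have hx : 1 ≤ x := Real.one_le_rpow one_le_two (by positivity)
  have hsq (k : ℕ) : β j k ^ 2 = if (k : ℝ) < x then (2 : ℝ) ^ (-(j : ℝ)) else 0 := by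
    rw [hβdef]
    split_ifs
    · rw [← Real.rpow_mul_natCast zero_le_two]
      ring_nf
    · simp
  calc levelEnergy β j
      = #((range (2 ^ j)).filter fun k : ℕ => (k : ℝ) < x) * (2 : ℝ) ^ (-(j : ℝ)) := by
        simp only [levelEnergy, hsq]
        rw [← sum_filter, sum_const, nsmul_eq_mul]
    _ ≤ (x + 1) * (2 : ℝ) ^ (-(j : ℝ)) := by
        gcongr
        exact card_filter_natCast_lt_le _ (by linarith)
    _ ≤ 2 * (x * (2 : ℝ) ^ (-(j : ℝ))) := by
        nlinarith [Real.rpow_pos_of_pos two_pos (-(j : ℝ))]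
    _ = 2 * (2 : ℝ) ^ (-(2 * α / (1 + 2 * α)) * j) := by
        rw [← Real.rpow_add two_pos]
        congr 2
        field_simp
        ring

/-- the array `β_{j,k} = 2^{−j/2}` for `k < 2^{j/(1+2α)}` and `0`
otherwise is square-summable and satisfies the condition `B^{α/(1+2α)}_{2,∞}`. -/
theorem stmt_13 (α : ℝ) (hα : 0 < α)
    (β : ℕ → ℕ → ℝ)
    (hβdef : ∀ j k : ℕ, β j k =
      if (k : ℝ) < (2 : ℝ) ^ ((j : ℝ) / (1 + 2 * α)) then (2 : ℝ) ^ (-(j : ℝ) / 2)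
      else 0) :
    SqSummable β ∧ CondB2 β α :=
  sqSummable_and_condB2_of_levelEnergy_le hα (levelEnergy_le_of_eq_ite (by positivity) hβdef)
end

section
/- Let H be a real Hilbert space, s ∈ H, α > 0, and M̃ a collection of finite-dimensional subspaces of H containing the zero subspace. Suppose there exists C̃ > 0 such that for every integer M ≥ 1, inf { ‖P_m s − s‖² : m ∈ M̃, D_m ≤ M } ≤ C̃ · M^{−2α}. Then there exists a constant C₁ > 0 (depending only on C̃ and α) such that for every T > 0: inf_{m ∈ M̃} ( ‖P_m s − s‖² + T² · D_m ) ≤ C₁ · (T²)^{2α/(1+2α)}. -/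
/-!
With `t = T²` and `β = 1 / (1 + 2α)`, take `M = ⌈t ^ (-β)⌉`. Choosing a model of dimension at most
`M` that nearly attains the best `M`-dimensional error bounds the penalized infimum by
`Ct · M ^ (-2α) + t · M`, and both terms are of order `t ^ (2α / (1 + 2α))` when `t ≤ 1`.
For `t > 1` the zero model alone gives the bound `‖s‖² ≤ ‖s‖² · t ^ (2α / (1 + 2α))`.
-/

section PenalizedInf

variable {ι : Type*} {err : ι → ℝ} (dim : ι → ℕ) {t : ℝ}

lemma sInf_penalized_le (herr : ∀ i, 0 ≤ err i) (ht : 0 ≤ t) (i : ι) :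
    sInf {x : ℝ | ∃ j, x = err j + t * dim j} ≤ err i + t * dim i :=
  csInf_le ⟨0, by rintro x ⟨j, rfl⟩; have := herr j; positivity⟩ ⟨i, rfl⟩

lemma sInf_penalized_le_sInf_add (herr : ∀ i, 0 ≤ err i) (ht : 0 ≤ t) {M : ℕ}
    (hM : ∃ i, dim i ≤ M) :
    sInf {x : ℝ | ∃ i, x = err i + t * dim i} ≤
      sInf {x : ℝ | ∃ i, dim i ≤ M ∧ x = err i} + t * M := by
  obtain ⟨j, hj⟩ := hM
  rw [← sub_le_iff_le_add]
  refine le_csInf ⟨err j, j, hj, rfl⟩ ?_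
  rintro x ⟨i, hiM, rfl⟩
  have hdim : (dim i : ℝ) ≤ M := by exact_mod_cast hiM
  have := sInf_penalized_le dim herr ht i
  nlinarith

end PenalizedInf

section Exponents

variable {α t : ℝ}

lemma natCeil_rpow_neg_inv_rpow_neg_le (hα : 0 ≤ α) (ht : 0 < t) :
    (⌈t ^ (-(1 + 2 * α)⁻¹)⌉₊ : ℝ) ^ (-(2 * α)) ≤ t ^ (2 * α / (1 + 2 * α)) := by
  calc (⌈t ^ (-(1 + 2 * α)⁻¹)⌉₊ : ℝ) ^ (-(2 * α))
      ≤ (t ^ (-(1 + 2 * α)⁻¹)) ^ (-(2 * α)) :=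
        Real.rpow_le_rpow_of_nonpos (by positivity) (Nat.le_ceil _) (by linarith)
    _ = t ^ (2 * α / (1 + 2 * α)) := by
        rw [← Real.rpow_mul ht.le]
        congr 1
        field_simp

lemma mul_natCeil_rpow_neg_inv_le (hα : 0 ≤ α) (ht₀ : 0 < t) (ht₁ : t ≤ 1) :
    t * ⌈t ^ (-(1 + 2 * α)⁻¹)⌉₊ ≤ 2 * t ^ (2 * α / (1 + 2 * α)) := by
  have hsplit : t ^ (2 * α / (1 + 2 * α)) = t * t ^ (-(1 + 2 * α)⁻¹) := by
    rw [show 2 * α / (1 + 2 * α) = 1 + -(1 + 2 * α)⁻¹ by field_simp; ring,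
      Real.rpow_add ht₀, Real.rpow_one]
  have ht_le : t ≤ t ^ (2 * α / (1 + 2 * α)) := by
    simpa using Real.rpow_le_rpow_of_exponent_ge ht₀ ht₁
      (div_le_one_of_le₀ (by linarith) (by positivity) : 2 * α / (1 + 2 * α) ≤ 1)
  have hceil := Nat.ceil_lt_add_one (Real.rpow_pos_of_pos ht₀ (-(1 + 2 * α)⁻¹)).le
  nlinarith

end Exponents

/-- if the best `M`-dimensional approximation error of `s` by models of the
collection decays like `M ^ (-2α)`, then the penalized approximation error with penalty
`T² · D_m` decays like `(T²) ^ (2α/(1+2α))`. -/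
theorem stmt_16 {H : Type*} [NormedAddCommGroup H] [InnerProductSpace ℝ H]
    {ι : Type*} (m : ι → Submodule ℝ H)
    [∀ i, FiniteDimensional ℝ (m i)] (i₀ : ι) (hi₀ : m i₀ = ⊥)
    (s : H) (α : ℝ) (hα : 0 < α)
    (Ct : ℝ) (hCt : 0 < Ct)
    (happrox : ∀ M : ℕ, 1 ≤ M →
      sInf {x : ℝ | ∃ i : ι, Module.finrank ℝ (m i) ≤ M ∧
          x = ‖(Submodule.orthogonalProjectionOnto (m i) s : H) - s‖ ^ 2} ≤ Ct * (M : ℝ) ^ (-(2 * α))) :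
    ∃ C₁ : ℝ, 0 < C₁ ∧ ∀ T : ℝ, 0 < T →
      sInf {x : ℝ | ∃ i : ι,
          x = ‖(Submodule.orthogonalProjectionOnto (m i) s : H) - s‖ ^ 2 +
            T ^ 2 * (Module.finrank ℝ (m i) : ℝ)} ≤
        C₁ * (T ^ 2) ^ (2 * α / (1 + 2 * α)) := by
  have herr i : 0 ≤ ‖(Submodule.orthogonalProjectionOnto (m i) s : H) - s‖ ^ 2 := by positivity
  have hdim₀ : Module.finrank ℝ (m i₀) = 0 := by rw [hi₀]; exact finrank_bot ℝ H
  have hproj₀ : (Submodule.orthogonalProjectionOnto (m i₀) s : H) = 0 :=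
    (Submodule.eq_bot_iff _).mp hi₀ _ (Submodule.orthogonalProjectionOnto (m i₀) s).2
  refine ⟨Ct + 2 + ‖s‖ ^ 2, by positivity, fun T hT => ?_⟩
  have ht : 0 < T ^ 2 := by positivity
  rcases le_or_gt (T ^ 2) 1 with ht₁ | ht₁
  · set M := ⌈(T ^ 2) ^ (-(1 + 2 * α)⁻¹)⌉₊
    have hM : 1 ≤ M := Nat.one_le_ceil_iff.mpr (by positivity)
    have hbias := natCeil_rpow_neg_inv_rpow_neg_le hα.le ht
    have hvar := mul_natCeil_rpow_neg_inv_le hα.le ht ht₁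
    calc _ ≤ _ + T ^ 2 * M :=
          sInf_penalized_le_sInf_add (fun i => Module.finrank ℝ (m i)) herr ht.le ⟨i₀, by omega⟩
      _ ≤ Ct * (M : ℝ) ^ (-(2 * α)) + T ^ 2 * M := by gcongr; exact happrox M hM
      _ ≤ (Ct + 2) * (T ^ 2) ^ (2 * α / (1 + 2 * α)) := by nlinarith
      _ ≤ _ := mul_le_mul_of_nonneg_right (by linarith [sq_nonneg ‖s‖]) (by positivity)
  · have hzero := sInf_penalized_le (fun i => Module.finrank ℝ (m i)) herr ht.le i₀
    rw [hproj₀, hdim₀, zero_sub, norm_neg, Nat.cast_zero, mul_zero, add_zero] at hzero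
    have : 1 ≤ (T ^ 2) ^ (2 * α / (1 + 2 * α)) := Real.one_le_rpow ht₁.le (by positivity)
    nlinarith [sq_nonneg ‖s‖]
end
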